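/- arXiv:1708.05634 — 2 statements merged into one kernel-verified Lean document; each statement's English description precedes it below -/
import Mathlib

section
/- Let N be a random variable with the negative binomial distribution with parameters a > 0 and p ∈ (0, 1), i.e. P(N = k) = C(a+k-1, k) (1-p)^a p^k for k = 0, 1, 2, …. Then for every positive integer i, the i-th cumulant of N equals a · Li_{1-i}(p) = a · ∑_{l=1}^{∞} l^{i-1} p^l, which also equals a · ∑_{b=1}^{i} S(i, b) · (b-1)! · (p/(1-p))^b, where S(i, b) is the Stirling number of the second kind. -/
/-!
The moment generating function of `N` is `((1 - p) / (1 - p eᵗ)) ^ a` by the binomial series, so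
near `0` the cumulant generating function is `a (log (1 - p) - log (1 - p eᵗ))`, with derivative
`a u` for `u = p eᵗ / (1 - p eᵗ)`. Since `u' = u (1 + u)`, the recursion
`S(n+1, b) = b S(n, b) + S(n, b-1)` shows that the `n`-th derivative is `a Pₙ(u)` with
`Pₙ(x) = stirlingPoly n x = ∑_b S(n, b) (b-1)! xᵇ`, and `u = p / (1 - p)` at `t = 0`. Expanding
`l ^ (n-1)` in falling factorials and using `∑_l l(l-1)⋯(l-k+1) pˡ = k! pᵏ / (1 - p) ^ (k+1)` gives
`Pₙ(p / (1 - p)) = ∑_l l ^ (n-1) pˡ`.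

`N` is not assumed measurable: since the masses of its fibres add up to `1`, it is a.e. measurable.
-/

open MeasureTheory ProbabilityTheory

def stirling2 : ℕ → ℕ → ℕ
  | 0, 0 => 0 + 1
  | 0, _ + 1 => 0
  | _ + 1, 0 => 0
  | n + 1, k + 1 => (k + 1) * stirling2 n (k + 1) + stirling2 n k

open Finset Nat Real Filter Topology Set

theorem stirling2_eq_stirlingSecond : stirling2 = stirlingSecond := by
  funext n k
  induction n generalizing k with
  | zero => cases k <;> rfl
  | succ n ih => cases k <;> simp [stirling2, stirlingSecond, ih]

namespace Nat

theorem mul_descFactorial_eq (n b : ℕ) :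
    n * n.descFactorial b = n.descFactorial (b + 1) + b * n.descFactorial b := by
  rcases le_or_gt b n with h | h
  · rw [descFactorial_succ, ← add_mul, Nat.sub_add_cancel h]
  · simp [descFactorial_eq_zero_iff_lt.2 h]

theorem pow_eq_sum_stirlingSecond_mul_descFactorial (n k : ℕ) :
    n ^ k = ∑ b ∈ range (k + 1), stirlingSecond k b * n.descFactorial b := by
  induction k with
  | zero => simp
  | succ k ih =>
    have shift : ∑ b ∈ range (k + 1), b * stirlingSecond k b * n.descFactorial b
        = ∑ b ∈ range (k + 1), (b + 1) * stirlingSecond k (b + 1) * n.descFactorial (b + 1) := by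
      rw [sum_range_succ', sum_range_succ, stirlingSecond_eq_zero_of_lt (lt_succ_self k)]
      simp
    calc n ^ (k + 1)
        = ∑ b ∈ range (k + 1), stirlingSecond k b * (n * n.descFactorial b) := by
          rw [pow_succ, ih, sum_mul]
          exact sum_congr rfl fun b _ => by ring
      _ = ∑ b ∈ range (k + 1), stirlingSecond k b * n.descFactorial (b + 1)
          + ∑ b ∈ range (k + 1), b * stirlingSecond k b * n.descFactorial b := by
          rw [← sum_add_distrib]
          exact sum_congr rfl fun b _ => by rw [mul_descFactorial_eq]; ring
      _ = ∑ b ∈ range (k + 2), stirlingSecond (k + 1) b * n.descFactorial b := by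
          rw [shift, sum_range_succ' _ (k + 1), ← sum_add_distrib]
          simp only [stirlingSecond_succ_succ, stirlingSecond_succ_zero, zero_mul, add_zero]
          exact sum_congr rfl fun b _ => by ring

theorem succ_pow_eq_sum_stirlingSecond_mul_descFactorial (l m : ℕ) :
    (l + 1) ^ m = ∑ b ∈ range (m + 1), stirlingSecond (m + 1) (b + 1) * l.descFactorial b := by
  refine Nat.eq_of_mul_eq_mul_left (by omega : 0 < l + 1) ?_
  rw [← pow_succ', pow_eq_sum_stirlingSecond_mul_descFactorial, sum_range_succ',
    stirlingSecond_succ_zero, zero_mul, add_zero, mul_sum]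
  exact sum_congr rfl fun b _ => by rw [succ_descFactorial_succ]; ring

end Nat

noncomputable def stirlingPoly (n : ℕ) (x : ℝ) : ℝ :=
  ∑ b ∈ range n, (stirlingSecond n (b + 1) : ℝ) * b ! * x ^ (b + 1)

theorem stirlingPoly_eq_sum_Icc (n : ℕ) (x : ℝ) :
    stirlingPoly n x = ∑ b ∈ Icc 1 n, (stirling2 n b : ℝ) * (b - 1)! * x ^ b := by
  rw [stirling2_eq_stirlingSecond, ← Finset.Ico_add_one_right_eq_Icc, sum_Ico_eq_sum_range,
    stirlingPoly]
  simp [add_comm]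

theorem stirlingPoly_succ {n : ℕ} (hn : n ≠ 0) (x : ℝ) :
    stirlingPoly (n + 1) x
      = ∑ b ∈ range n, (stirlingSecond n (b + 1) : ℝ) * (b + 1)! * (x ^ (b + 1) + x ^ (b + 2)) := by
  obtain ⟨m, rfl⟩ := exists_eq_succ_of_ne_zero hn
  have top : ∑ b ∈ range (m + 2), (b + 1 : ℝ) * stirlingSecond (m + 1) (b + 1) * b ! * x ^ (b + 1)
      = ∑ b ∈ range (m + 1), (stirlingSecond (m + 1) (b + 1) : ℝ) * (b + 1)! * x ^ (b + 1) := by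
    rw [sum_range_succ, stirlingSecond_eq_zero_of_lt (lt_succ_self _)]
    simp only [cast_zero, mul_zero, zero_mul, add_zero, factorial_succ, cast_mul]
    exact sum_congr rfl fun b _ => by push_cast; ring
  have bottom : ∑ b ∈ range (m + 2), (stirlingSecond (m + 1) b : ℝ) * b ! * x ^ (b + 1)
      = ∑ b ∈ range (m + 1), (stirlingSecond (m + 1) (b + 1) : ℝ) * (b + 1)! * x ^ (b + 2) := by
    rw [sum_range_succ', stirlingSecond_succ_zero]
    simp
  calc stirlingPoly (m + 1 + 1) x
      = ∑ b ∈ range (m + 2), (b + 1 : ℝ) * stirlingSecond (m + 1) (b + 1) * b ! * x ^ (b + 1)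
        + ∑ b ∈ range (m + 2), (stirlingSecond (m + 1) b : ℝ) * b ! * x ^ (b + 1) := by
        rw [stirlingPoly, ← sum_add_distrib]
        exact sum_congr rfl fun b _ => by rw [stirlingSecond_succ_succ]; push_cast; ring
    _ = _ := by
        rw [top, bottom, ← sum_add_distrib]
        exact sum_congr rfl fun b _ => by ring

theorem hasDerivAt_stirlingPoly_comp {n : ℕ} (hn : n ≠ 0) {u : ℝ → ℝ} {t : ℝ}
    (hu : HasDerivAt u (u t * (1 + u t)) t) :
    HasDerivAt (fun s => stirlingPoly n (u s)) (stirlingPoly (n + 1) (u t)) t := by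
  have h : HasDerivAt (fun s => stirlingPoly n (u s)) _ t := HasDerivAt.fun_sum
    fun b (_ : b ∈ range n) => (hu.fun_pow (b + 1)).const_mul ((stirlingSecond n (b + 1) : ℝ) * b !)
  refine h.congr_deriv ?_
  rw [stirlingPoly_succ hn]
  refine sum_congr rfl fun b _ => ?_
  push_cast [factorial_succ]
  ring

theorem iteratedDeriv_eq_mul_stirlingPoly {f u : ℝ → ℝ} {s : Set ℝ} (hs : IsOpen s) (c : ℝ)
    (hu : ∀ t ∈ s, HasDerivAt u (u t * (1 + u t)) t) (hf : ∀ t ∈ s, HasDerivAt f (c * u t) t)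
    {n : ℕ} (hn : n ≠ 0) {t : ℝ} (ht : t ∈ s) :
    iteratedDeriv n f t = c * stirlingPoly n (u t) := by
  obtain ⟨m, rfl⟩ := exists_eq_succ_of_ne_zero hn
  clear hn
  induction m generalizing t with
  | zero => simp [stirlingPoly, stirlingSecond_self, (hf t ht).deriv]
  | succ m ih =>
    have heq : iteratedDeriv (m + 1) f =ᶠ[𝓝 t] fun s => c * stirlingPoly (m + 1) (u s) :=
      eventually_of_mem (hs.mem_nhds ht) fun s hs => ih hs
    rw [iteratedDeriv_succ, heq.deriv_eq]
    exact ((hasDerivAt_stirlingPoly_comp (succ_ne_zero m) (hu t ht)).const_mul c).deriv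

theorem hasSum_descFactorial_mul_pow_succ {p : ℝ} (hp0 : 0 ≤ p) (hp1 : p < 1) (k : ℕ) :
    HasSum (fun l : ℕ => (l.descFactorial k : ℝ) * p ^ (l + 1)) (k ! * (p / (1 - p)) ^ (k + 1)) := by
  rw [← hasSum_nat_add_iff' k, sum_eq_zero fun l hl => by
    simp [descFactorial_eq_zero_iff_lt.2 (mem_range.1 hl)], sub_zero]
  have h := (hasSum_choose_mul_geometric_of_norm_lt_one k (r := p)
    (by rwa [norm_eq_abs, abs_of_nonneg hp0])).mul_left (k ! * p ^ (k + 1))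
  rw [div_pow, ← mul_one_div, ← mul_assoc]
  refine h.congr_fun fun n => ?_
  rw [descFactorial_eq_factorial_mul_choose]
  push_cast
  ring

theorem hasSum_succ_pow_mul_pow_succ {p : ℝ} (hp0 : 0 ≤ p) (hp1 : p < 1) (m : ℕ) :
    HasSum (fun l : ℕ => ((l : ℝ) + 1) ^ m * p ^ (l + 1)) (stirlingPoly (m + 1) (p / (1 - p))) := by
  have h := hasSum_sum fun b (_ : b ∈ range (m + 1)) =>
    (hasSum_descFactorial_mul_pow_succ hp0 hp1 b).mul_left (stirlingSecond (m + 1) (b + 1) : ℝ)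
  have hval : stirlingPoly (m + 1) (p / (1 - p)) = ∑ b ∈ range (m + 1),
      (stirlingSecond (m + 1) (b + 1) : ℝ) * (b ! * (p / (1 - p)) ^ (b + 1)) :=
    sum_congr rfl fun b _ => by ring
  rw [hval]
  refine h.congr_fun fun l => ?_
  rw [← cast_succ, ← cast_pow, succ_pow_eq_sum_stirlingSecond_mul_descFactorial]
  push_cast
  rw [sum_mul]
  exact sum_congr rfl fun b _ => by ring

theorem Real.Gamma_add_nat {a : ℝ} (ha : 0 < a) (n : ℕ) :
    Gamma (a + n) = (ascPochhammer ℝ n).eval a * Gamma a := by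
  induction n with
  | zero => simp
  | succ n ih =>
    rw [cast_succ, ← add_assoc, Gamma_add_one (by positivity : a + n ≠ 0), ih,
      ascPochhammer_succ_eval]
    ring

theorem Real.ringChoose_eq_Gamma_div {a : ℝ} (ha : 0 < a) (n : ℕ) :
    Ring.choose (a + n - 1) n = Gamma (a + n) / (Gamma a * n !) := by
  have hfac := Ring.factorial_nsmul_multichoose_eq_ascPochhammer a n
  rw [Ring.multichoose_eq, Polynomial.ascPochhammer_smeval_eq_eval, nsmul_eq_mul] at hfac
  rw [Gamma_add_nat ha, ← hfac]
  field_simp [(Gamma_pos_of_pos ha).ne', (cast_pos.2 n.factorial_pos).ne']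

theorem hasSum_Gamma_div_mul_pow {a x : ℝ} (ha : 0 < a) (hx : |x| < 1) :
    HasSum (fun k : ℕ => Gamma (a + k) / (Gamma a * k !) * x ^ k) ((1 - x) ^ (-a)) := by
  have h := (one_div_one_sub_rpow_hasFPowerSeriesOnBall_zero a).hasSum (y := x)
    (by simpa [enorm_eq_nnnorm, ← NNReal.coe_lt_one] using hx)
  simp only [FormalMultilinearSeries.ofScalars_apply_eq, smul_eq_mul, zero_add] at h
  rw [rpow_neg (by linarith [abs_lt.1 hx]), inv_eq_one_div]
  exact h.congr_fun fun k => by rw [ringChoose_eq_Gamma_div ha]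

theorem hasSum_negBinomial_mul_exp {a p t : ℝ} (ha : 0 < a) (hp : 0 ≤ p) (ht : p * exp t < 1) :
    HasSum (fun k : ℕ => Gamma (a + k) / (Gamma a * k !) * (1 - p) ^ a * p ^ k * exp (t * k))
      ((1 - p) ^ a * (1 - p * exp t) ^ (-a)) := by
  have hx : |p * exp t| < 1 := by rwa [abs_of_nonneg (by positivity)]
  refine ((hasSum_Gamma_div_mul_pow ha hx).mul_left ((1 - p) ^ a)).congr_fun fun k => ?_
  rw [mul_pow, mul_comm t, exp_nat_mul]
  ring

section Measure

variable {Ω β : Type*} [MeasurableSpace Ω] {μ : Measure Ω}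

theorem nullMeasurableSet_preimage_singleton_of_tsum_eq [Countable β] [IsFiniteMeasure μ]
    {f : Ω → β} (h : ∑' b, μ (f ⁻¹' {b}) = μ univ) (b : β) :
    NullMeasurableSet (f ⁻¹' {b}) μ := by
  classical
  set E := toMeasurable μ (f ⁻¹' {b})
  set F := ⋃ c, if c = b then ∅ else toMeasurable μ (f ⁻¹' {c})
  have hF : MeasurableSet F :=
    .iUnion fun c => by split_ifs <;> simp [measurableSet_toMeasurable]
  have hcompl : (f ⁻¹' {b})ᶜ ⊆ F := fun ω hω =>
    mem_iUnion.2 ⟨f ω, by rw [if_neg (show f ω ≠ b from hω)]; exact subset_toMeasurable _ _ rfl⟩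
  have hEF : E ∪ F = univ := eq_univ_of_forall fun ω => by
    by_cases hω : f ω = b
    · exact Or.inl (subset_toMeasurable _ _ hω)
    · exact Or.inr (hcompl hω)
  have hF_le : μ F ≤ ∑' c, if c = b then 0 else μ (f ⁻¹' {c}) :=
    (measure_iUnion_le _).trans_eq <| tsum_congr fun c => by
      split_ifs <;> simp [measure_toMeasurable]
  have hle : μ (E ∩ F) + μ univ ≤ 0 + μ univ := by
    calc μ (E ∩ F) + μ univ = μ E + μ F := by rw [← hEF, add_comm, measure_union_add_inter _ hF]
      _ ≤ μ (f ⁻¹' {b}) + ∑' c, if c = b then 0 else μ (f ⁻¹' {c}) := by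
          rw [measure_toMeasurable]; gcongr
      _ = 0 + μ univ := by
          rw [zero_add, ← h]
          exact (ENNReal.tsum_eq_add_tsum_ite (f := fun c => μ (f ⁻¹' {c})) b).symm
  have hnull : μ (E ∩ F) = 0 :=
    le_zero_iff.1 (ENNReal.le_of_add_le_add_right (measure_ne_top μ univ) hle)
  refine (measurableSet_toMeasurable μ (f ⁻¹' {b})).nullMeasurableSet.congr
    (ae_eq_set.2 ⟨?_, ?_⟩)
  · exact measure_mono_null (fun ω hω => show ω ∈ E ∩ F from ⟨hω.1, hcompl hω.2⟩) hnull
  · simp [sdiff_eq_empty.2 (subset_toMeasurable μ _)]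

theorem aemeasurable_of_tsum_measure_preimage_singleton [Countable β] [MeasurableSpace β]
    [IsFiniteMeasure μ] {f : Ω → β}
    (h : ∑' b, μ (f ⁻¹' {b}) = μ univ) : AEMeasurable f μ :=
  NullMeasurable.aemeasurable fun s _ => by
    rw [← biUnion_preimage_singleton]
    exact .biUnion s.to_countable fun b _ => nullMeasurableSet_preimage_singleton_of_tsum_eq h b

theorem hasSum_mgf_natCast [IsFiniteMeasure μ] {N : Ω → ℕ} (hN : AEMeasurable N μ) {t : ℝ}
    (h : Summable fun k : ℕ => μ.real (N ⁻¹' {k}) * exp (t * k)) :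
    HasSum (fun k : ℕ => μ.real (N ⁻¹' {k}) * exp (t * k)) (mgf (fun ω => (N ω : ℝ)) μ t) := by
  have hmap : ∀ k : ℕ, (μ.map N {k}).toReal = μ.real (N ⁻¹' {k}) := fun k => by
    rw [Measure.map_apply_of_aemeasurable hN (measurableSet_singleton k), measureReal_def]
  have h' := hasSum_integral_sum_dirac (f := fun k : ℕ => exp (t * k)) (x := id)
    (fun k => measure_ne_top (μ.map N) {k}) (by simpa [hmap] using h)
  simp only [id, Measure.sum_smul_dirac] at h'
  rw [integral_map hN measurable_from_nat.aestronglyMeasurable] at h'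
  simpa [hmap, mgf] using h'

variable [IsProbabilityMeasure μ] {a p : ℝ} {N : Ω → ℕ}

theorem mgf_negBinomial (ha : 0 < a) (hp0 : 0 ≤ p) (hp1 : p < 1)
    (hN : ∀ k : ℕ, μ {ω | N ω = k} =
      ENNReal.ofReal (Gamma (a + k) / (Gamma a * k !) * (1 - p) ^ a * p ^ k))
    {t : ℝ} (ht : p * exp t < 1) :
    mgf (fun ω => (N ω : ℝ)) μ t = (1 - p) ^ a * (1 - p * exp t) ^ (-a) := by
  have hpmf_nonneg : ∀ k : ℕ, 0 ≤ Gamma (a + k) / (Gamma a * k !) * (1 - p) ^ a * p ^ k :=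
    fun k => by
      have := Gamma_pos_of_pos (by positivity : 0 < a + k)
      have := Gamma_pos_of_pos ha
      have := rpow_pos_of_pos (sub_pos.2 hp1) a
      positivity
  have hmass : HasSum (fun k : ℕ => Gamma (a + k) / (Gamma a * k !) * (1 - p) ^ a * p ^ k) 1 := by
    simpa [sub_pos.2 hp1, ← rpow_add] using
      hasSum_negBinomial_mul_exp ha hp0 (t := 0) (by simpa using hp1)
  have hfiber : ∀ k : ℕ, μ (N ⁻¹' {k}) =
      ENNReal.ofReal (Gamma (a + k) / (Gamma a * k !) * (1 - p) ^ a * p ^ k) := hN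
  have hN_ae : AEMeasurable N μ := by
    refine aemeasurable_of_tsum_measure_preimage_singleton ?_
    rw [tsum_congr hfiber, ← ENNReal.ofReal_tsum_of_nonneg hpmf_nonneg hmass.summable,
      hmass.tsum_eq, ENNReal.ofReal_one, measure_univ]
  have hreal : ∀ k : ℕ, μ.real (N ⁻¹' {k}) = Gamma (a + k) / (Gamma a * k !) * (1 - p) ^ a * p ^ k :=
    fun k => by rw [measureReal_def, hfiber, ENNReal.toReal_ofReal (hpmf_nonneg k)]
  have hsum := hasSum_negBinomial_mul_exp ha hp0 ht
  simp only [← hreal] at hsum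
  exact (hasSum_mgf_natCast hN_ae hsum.summable).unique hsum

noncomputable def negBinomialCgf (a p t : ℝ) : ℝ := a * (log (1 - p) - log (1 - p * exp t))

theorem cgf_negBinomial (ha : 0 < a) (hp0 : 0 ≤ p) (hp1 : p < 1)
    (hN : ∀ k : ℕ, μ {ω | N ω = k} =
      ENNReal.ofReal (Gamma (a + k) / (Gamma a * k !) * (1 - p) ^ a * p ^ k))
    {t : ℝ} (ht : p * exp t < 1) :
    cgf (fun ω => (N ω : ℝ)) μ t = negBinomialCgf a p t := by
  rw [cgf, mgf_negBinomial ha hp0 hp1 hN ht, log_mul (rpow_pos_of_pos (sub_pos.2 hp1) a).ne'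
    (rpow_pos_of_pos (sub_pos.2 ht) (-a)).ne', log_rpow (sub_pos.2 hp1),
    log_rpow (sub_pos.2 ht), negBinomialCgf]
  ring

end Measure

theorem hasDerivAt_negBinomialCgf {a p t : ℝ} (ht : p * exp t ≠ 1) :
    HasDerivAt (negBinomialCgf a p) (a * (p * exp t / (1 - p * exp t))) t := by
  have hne : 1 - p * exp t ≠ 0 := sub_ne_zero.2 (Ne.symm ht)
  refine ((((hasDerivAt_exp t).const_mul p).const_sub 1).log hne).const_sub (log (1 - p))
    |>.const_mul a |>.congr_deriv ?_
  ring

theorem hasDerivAt_mul_exp_div_one_sub {p t : ℝ} (ht : p * exp t ≠ 1) :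
    HasDerivAt (fun s => p * exp s / (1 - p * exp s))
      (p * exp t / (1 - p * exp t) * (1 + p * exp t / (1 - p * exp t))) t := by
  have hne : 1 - p * exp t ≠ 0 := sub_ne_zero.2 (Ne.symm ht)
  refine ((hasDerivAt_exp t).const_mul p).div
    (((hasDerivAt_exp t).const_mul p).const_sub 1) hne |>.congr_deriv ?_
  field_simp
  ring

/-- If `N` is negative binomial with parameters `a > 0` and `p ∈ (0,1)`, then for every
`i ≥ 1` the `i`-th cumulant of `N` (the `i`-th derivative at `0` of the cumulant generating
function) equals `a ⬝ Li_{1-i}(p) = a ⬝ ∑_{l ≥ 1} l^(i-1) p^l`, which also equals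
`a ⬝ ∑_{b=1}^i S(i,b) (b-1)! (p/(1-p))^b`. -/
theorem negBinomial_cumulant {Ω : Type*} [MeasurableSpace Ω] (μ : Measure Ω)
    [IsProbabilityMeasure μ] (a p : ℝ) (ha : 0 < a) (hp0 : 0 < p) (hp1 : p < 1)
    (N : Ω → ℕ)
    (hN : ∀ k : ℕ, μ {ω | N ω = k} =
      ENNReal.ofReal (Real.Gamma (a + k) / (Real.Gamma a * Nat.factorial k)
        * (1 - p) ^ a * p ^ k))
    (i : ℕ) (hi : 1 ≤ i) :
    iteratedDeriv i (cgf (fun ω => (N ω : ℝ)) μ) 0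
        = a * ∑' l : ℕ, ((l : ℝ) + 1) ^ (i - 1) * p ^ (l + 1)
      ∧ iteratedDeriv i (cgf (fun ω => (N ω : ℝ)) μ) 0
        = a * ∑ b ∈ Finset.Icc 1 i,
            (stirling2 i b : ℝ) * Nat.factorial (b - 1) * (p / (1 - p)) ^ b := by
  set s := {t : ℝ | p * exp t < 1}
  have hs : IsOpen s := isOpen_lt (by fun_prop) continuous_const
  have h0 : (0 : ℝ) ∈ s := by simpa [s] using hp1
  have hcgf : cgf (fun ω => (N ω : ℝ)) μ =ᶠ[𝓝 0] negBinomialCgf a p :=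
    eventually_of_mem (hs.mem_nhds h0) fun t ht => cgf_negBinomial ha hp0.le hp1 hN ht
  have hderiv : iteratedDeriv i (cgf (fun ω => (N ω : ℝ)) μ) 0
      = a * stirlingPoly i (p / (1 - p)) := by
    rw [hcgf.iteratedDeriv_eq, iteratedDeriv_eq_mul_stirlingPoly hs a
      (fun t ht => hasDerivAt_mul_exp_div_one_sub ht.ne)
      (fun t ht => hasDerivAt_negBinomialCgf ht.ne) (one_le_iff_ne_zero.1 hi) h0,
      exp_zero, mul_one]
  obtain ⟨m, rfl⟩ : ∃ m, i = m + 1 := ⟨i - 1, by omega⟩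
  refine ⟨?_, ?_⟩
  · rw [hderiv, add_tsub_cancel_right, (hasSum_succ_pow_mul_pow_succ hp0.le hp1 m).tsum_eq]
  · rw [hderiv, stirlingPoly_eq_sum_Icc]
end

section
/- Let θ > 0, let n ≥ 2, and let G_1, …, G_{n-1} be independent random variables where G_k is geometric on ℕ₀ with success probability k/(k+θ). Set S_n = ∑_{k=1}^{n-1} G_k. Then for every m ∈ ℕ₀, P(S_n = m) = ((n-1)/θ) · ∑_{k=1}^{n-1} (-1)^{k-1} C(n-2, k-1) (θ/(k+θ))^{m+1}, where C(n, k) denotes the binomial coefficient. -/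
/-!
Induction on the number of summands. With `r_k = θ/(k+θ)` the law of `G_k` is
`(1 - r_k) r_k^b`, and the claimed law of `S_n` is a combination of the sequences `r_k^(a+1)`,
`k < n`. Convolving `r_i^(a+1)` with the law of `G_k` gives a multiple of
`r_i^(m+1) - r_k^(m+1)`, because `∑_{a+b=m} r^a s^b = (r^(m+1) - s^(m+1))/(r - s)`; the binomial
coefficients then recombine through `(j+1) C(j,i) = (j+1-i) C(j+1,i)` and
`∑_{i≤j} (-1)^i C(j+1,i) = (-1)^j`.

The events `{G_k = c}` need not be measurable, so independence only gives the upper bound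
`P(S = m) ≤ ∑_{c_1+⋯+c_{n-1}=m} ∏ P(G_k = c_k)`. It is an equality because the right-hand
side has total mass one while the events `{S = m}` cover `Ω`.
-/

open MeasureTheory ProbabilityTheory Finset

theorem Finset.Nat.sum_antidiagonalTuple_succ {M : Type*} [AddCommMonoid M] (j m : ℕ)
    (F : (Fin (j + 1) → ℕ) → M) :
    ∑ c ∈ antidiagonalTuple (j + 1) m, F c =
      ∑ x ∈ antidiagonal m, ∑ c ∈ antidiagonalTuple j x.1, F (Fin.snoc c x.2) := by
  rw [sum_sigma']
  refine sum_nbij' (fun c => ⟨(∑ i : Fin j, c i.castSucc, c (Fin.last j)), Fin.init c⟩)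
    (fun x => Fin.snoc x.2 x.1.2) ?_ ?_ ?_ ?_ ?_
  · intro c hc
    simp only [Nat.mem_antidiagonalTuple, mem_sigma, HasAntidiagonal.mem_antidiagonal] at hc ⊢
    exact ⟨by rw [← hc, Fin.sum_univ_castSucc], rfl⟩
  · rintro ⟨⟨a, b⟩, c⟩ hx
    simp only [Nat.mem_antidiagonalTuple, mem_sigma, HasAntidiagonal.mem_antidiagonal] at hx ⊢
    simp [Fin.sum_univ_castSucc, hx]
  · intro c _
    exact Fin.snoc_init_self c
  · rintro ⟨⟨a, b⟩, c⟩ hx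
    simp only [Nat.mem_antidiagonalTuple, mem_sigma] at hx
    simp [hx.2]
  · intro c _
    rw [Fin.snoc_init_self]

theorem Finset.sum_Icc_one_eq_sum_range {M : Type*} [AddCommMonoid M] (f : ℕ → M) (n : ℕ) :
    ∑ k ∈ Icc 1 n, f k = ∑ i ∈ range n, f (i + 1) := by
  rw [range_eq_Ico, sum_Ico_add' f 0 n 1, zero_add, Ico_add_one_right_eq_Icc]

theorem sum_range_neg_one_pow_mul_choose_succ {R : Type*} [CommRing R] (j : ℕ) :
    ∑ i ∈ range (j + 1), (-1 : R) ^ i * ((j + 1).choose i : R) = (-1) ^ j := by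
  have := congrArg (Int.cast : ℤ → R)
    (Int.alternating_sum_range_choose_eq_choose (n := j) (m := j))
  push_cast at this
  simpa using this

theorem sum_range_neg_one_pow_mul_succ_choose_succ {R : Type*} [CommRing R] (j : ℕ) :
    ∑ i ∈ range (j + 1), (-1 : R) ^ i * ((j + 1).choose (i + 1) : R) = 1 := by
  have := congrArg (Int.cast : ℤ → R) (Int.alternating_sum_range_choose_of_ne j.succ_ne_zero)
  push_cast at this
  rw [sum_range_succ'] at this
  simp only [pow_succ, mul_neg_one, neg_mul, sum_neg_distrib, Nat.choose_zero_right, pow_zero,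
    Nat.cast_one, mul_one] at this
  linear_combination -this

section convMass

variable {R : Type*} [CommSemiring R]

noncomputable def convMass {j : ℕ} (p : Fin j → ℕ → R) (m : ℕ) : R :=
  ∑ c ∈ Nat.antidiagonalTuple j m, ∏ i, p i (c i)

theorem convMass_one (p : Fin 1 → ℕ → R) (m : ℕ) : convMass p m = p 0 m := by
  simp [convMass, Nat.antidiagonalTuple_one]

theorem convMass_succ {j : ℕ} (p : Fin (j + 1) → ℕ → R) (m : ℕ) :
    convMass p m =
      ∑ x ∈ antidiagonal m, convMass (fun i => p i.castSucc) x.1 * p (Fin.last j) x.2 := by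
  simp only [convMass, Nat.sum_antidiagonalTuple_succ, Fin.prod_univ_castSucc, Fin.snoc_castSucc,
    Fin.snoc_last, sum_mul]

theorem convMass_nonneg [PartialOrder R] [IsOrderedRing R] {j : ℕ} {p : Fin j → ℕ → R}
    (hp : ∀ i m, 0 ≤ p i m) (m : ℕ) : 0 ≤ convMass p m :=
  sum_nonneg fun _ _ => prod_nonneg fun _ _ => hp _ _

end convMass

noncomputable def geomMass (θ k : ℝ) (m : ℕ) : ℝ := k / (k + θ) * (θ / (k + θ)) ^ m

theorem geomMass_nonneg {θ k : ℝ} (hθ : 0 ≤ θ) (hk : 0 ≤ k) (m : ℕ) :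
    0 ≤ geomMass θ k m := by
  unfold geomMass; positivity

theorem sum_antidiagonal_pow_mul_geomMass {θ k l : ℝ} (hθ : θ ≠ 0) (hk : k + θ ≠ 0)
    (hl : l + θ ≠ 0) (hkl : k ≠ l) (m : ℕ) :
    ∑ x ∈ antidiagonal m, (θ / (k + θ)) ^ (x.1 + 1) * geomMass θ l x.2
      = l / (l - k) * ((θ / (k + θ)) ^ (m + 1) - (θ / (l + θ)) ^ (m + 1)) := by
  have hlk : l - k ≠ 0 := sub_ne_zero.2 hkl.symm
  have hdiff : θ / (k + θ) - θ / (l + θ) = θ * (l - k) / ((k + θ) * (l + θ)) := by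
    field_simp; ring
  have hne : θ / (k + θ) - θ / (l + θ) ≠ 0 := by
    rw [hdiff]; exact div_ne_zero (mul_ne_zero hθ hlk) (mul_ne_zero hk hl)
  have hgeom := geom₂_sum (sub_ne_zero.1 hne) (m + 1)
  rw [Nat.add_sub_cancel, ← Nat.sum_antidiagonal_eq_sum_range_succ
    (fun a b => (θ / (k + θ)) ^ a * (θ / (l + θ)) ^ b)] at hgeom
  calc ∑ x ∈ antidiagonal m, (θ / (k + θ)) ^ (x.1 + 1) * geomMass θ l x.2
      = θ / (k + θ) * (l / (l + θ)) *
          ∑ x ∈ antidiagonal m, (θ / (k + θ)) ^ x.1 * (θ / (l + θ)) ^ x.2 := by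
        rw [mul_sum]; exact sum_congr rfl fun x _ => by rw [geomMass]; ring
    _ = θ / (k + θ) * (l / (l + θ)) / (θ / (k + θ) - θ / (l + θ))
          * ((θ / (k + θ)) ^ (m + 1) - (θ / (l + θ)) ^ (m + 1)) := by
        rw [hgeom]; ring
    _ = _ := by
        rw [hdiff]
        field_simp

/-- The claimed law of `G_1 + ⋯ + G_{j+1}`, i.e. of `S_n` for `n = j + 2`. -/
noncomputable def segregatingSitesMass (θ : ℝ) (j m : ℕ) : ℝ :=
  (j + 1) / θ *
    ∑ i ∈ range (j + 1), (-1) ^ i * (j.choose i : ℝ) * (θ / (i + 1 + θ)) ^ (m + 1)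

theorem choose_mul_sum_antidiagonal_pow_mul_geomMass {θ : ℝ} (hθ : 0 < θ) {i j : ℕ}
    (hij : i ≤ j) (m : ℕ) :
    (j + 1) * (j.choose i : ℝ) *
        ∑ x ∈ antidiagonal m, (θ / (i + 1 + θ)) ^ (x.1 + 1) * geomMass θ (j + 2) x.2
      = (j + 2) * ((j + 1).choose i : ℝ) *
          ((θ / (i + 1 + θ)) ^ (m + 1) - (θ / (j + 2 + θ)) ^ (m + 1)) := by
  have hij' : (i : ℝ) ≤ j := by exact_mod_cast hij
  have hchoose : (j.choose i : ℝ) * (j + 1) = ((j + 1).choose i : ℝ) * (j + 1 - i) := by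
    have := congrArg (Nat.cast : ℕ → ℝ) (Nat.choose_mul_succ_eq j i)
    push_cast [Nat.cast_sub (Nat.le_succ_of_le hij)] at this
    exact this
  rw [sum_antidiagonal_pow_mul_geomMass hθ.ne' (by positivity) (by positivity) (by linarith) m]
  generalize (θ / (i + 1 + θ)) ^ (m + 1) - (θ / (j + 2 + θ)) ^ (m + 1) = D
  have : (j : ℝ) + 2 - (i + 1) ≠ 0 := by linarith
  field_simp
  linear_combination D * hchoose

theorem sum_antidiagonal_segregatingSitesMass_mul_geomMass {θ : ℝ} (hθ : 0 < θ) (j m : ℕ) :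
    ∑ x ∈ antidiagonal m, segregatingSitesMass θ j x.1 * geomMass θ (j + 2) x.2
      = segregatingSitesMass θ (j + 1) m := by
  calc _ = ∑ i ∈ range (j + 1), (-1) ^ i / θ * ((j + 1) * (j.choose i : ℝ) *
          ∑ x ∈ antidiagonal m, (θ / (i + 1 + θ)) ^ (x.1 + 1) * geomMass θ (j + 2) x.2) := by
        simp only [segregatingSitesMass, sum_mul, mul_sum]
        rw [sum_comm]
        exact sum_congr rfl fun i _ => sum_congr rfl fun x _ => by ring
    _ = ∑ i ∈ range (j + 1), (-1) ^ i / θ * ((j + 2) * ((j + 1).choose i : ℝ) *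
          ((θ / (i + 1 + θ)) ^ (m + 1) - (θ / (j + 2 + θ)) ^ (m + 1))) :=
        sum_congr rfl fun i hi => by
          rw [choose_mul_sum_antidiagonal_pow_mul_geomMass hθ (mem_range_succ_iff.1 hi)]
    _ = (j + 2) / θ *
          (∑ i ∈ range (j + 1),
              (-1) ^ i * ((j + 1).choose i : ℝ) * (θ / (i + 1 + θ)) ^ (m + 1)
            - (∑ i ∈ range (j + 1), (-1) ^ i * ((j + 1).choose i : ℝ)) *
              (θ / (j + 2 + θ)) ^ (m + 1)) := by
        rw [sum_mul, ← sum_sub_distrib, mul_sum]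
        exact sum_congr rfl fun i _ => by ring
    _ = _ := by
        rw [sum_range_neg_one_pow_mul_choose_succ, segregatingSitesMass, sum_range_succ _ (j + 1),
          Nat.choose_self]
        push_cast
        ring

theorem convMass_geomMass {θ : ℝ} (hθ : 0 < θ) (j : ℕ) :
    convMass (fun i : Fin (j + 1) => geomMass θ ((i : ℕ) + 1)) = segregatingSitesMass θ j := by
  induction j with
  | zero =>
    ext m
    rw [convMass_one, segregatingSitesMass, geomMass]
    simp only [Fin.val_zero, Nat.cast_zero, zero_add, Nat.choose_self, range_one, sum_singleton,
      pow_zero, pow_succ, Nat.cast_one]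
    field_simp
  | succ j ih =>
    ext m
    rw [convMass_succ]
    simp only [Fin.val_castSucc, ih, Fin.val_last, Nat.cast_add, Nat.cast_one, add_assoc,
      one_add_one_eq_two]
    exact sum_antidiagonal_segregatingSitesMass_mul_geomMass hθ j m

theorem hasSum_pow_succ_div_add {θ k : ℝ} (hθ : 0 < θ) (hk : 0 < k) :
    HasSum (fun m : ℕ => (θ / (k + θ)) ^ (m + 1)) (θ / k) := by
  have hr : θ / (k + θ) < 1 := (div_lt_one (by positivity)).2 (by linarith)
  have h := (hasSum_geometric_of_lt_one (by positivity) hr).mul_left (θ / (k + θ))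
  have hval : θ / (k + θ) * (1 - θ / (k + θ))⁻¹ = θ / k := by
    rw [one_sub_div (by positivity), add_sub_cancel_right]
    field_simp
  simpa only [pow_succ', hval] using h

theorem hasSum_segregatingSitesMass {θ : ℝ} (hθ : 0 < θ) (j : ℕ) :
    HasSum (segregatingSitesMass θ j) 1 := by
  have h := (hasSum_sum fun i (_ : i ∈ range (j + 1)) =>
    (hasSum_pow_succ_div_add hθ (k := i + 1) (by positivity)).mul_left
      ((-1) ^ i * (j.choose i : ℝ))).mul_left ((j + 1) / θ)
  suffices hval :
      (j + 1) / θ * ∑ i ∈ range (j + 1), (-1) ^ i * (j.choose i : ℝ) * (θ / (i + 1)) = 1 by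
    rwa [hval] at h
  rw [mul_sum]
  refine (sum_congr rfl fun i _ => ?_).trans (sum_range_neg_one_pow_mul_succ_choose_succ j)
  have hchoose := congrArg (Nat.cast : ℕ → ℝ) (Nat.add_one_mul_choose_eq j i)
  push_cast at hchoose
  field_simp
  linear_combination hchoose

theorem ENNReal.ofReal_convMass {j : ℕ} {p : Fin j → ℕ → ℝ} (hp : ∀ i m, 0 ≤ p i m)
    (m : ℕ) :
    ENNReal.ofReal (convMass p m) = convMass (fun i k => ENNReal.ofReal (p i k)) m := by
  rw [convMass, ENNReal.ofReal_sum_of_nonneg fun _ _ => prod_nonneg fun _ _ => hp _ _]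
  exact sum_congr rfl fun _ _ => ENNReal.ofReal_prod_of_nonneg fun _ _ => hp _ _

theorem ProbabilityTheory.iIndepFun.measure_sum_eq_le {Ω : Type*} [MeasurableSpace Ω]
    {μ : Measure Ω} {j : ℕ} {X : Fin j → Ω → ℕ} (hX : iIndepFun X μ) (m : ℕ) :
    μ {ω | ∑ i, X i ω = m} ≤ convMass (fun i k => μ {ω | X i ω = k}) m := by
  have hcover : {ω | ∑ i, X i ω = m} =
      ⋃ c ∈ Nat.antidiagonalTuple j m, ⋂ i, {ω | X i ω = c i} := by
    ext ω
    simp only [Set.mem_ofPred_eq, Set.mem_iUnion, Set.mem_iInter, Nat.mem_antidiagonalTuple]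
    exact ⟨fun h => ⟨fun i => X i ω, h, fun _ => rfl⟩,
      fun ⟨c, hc, hXc⟩ => by simp only [hXc, hc]⟩
  rw [hcover]
  refine (measure_biUnion_finset_le _ _).trans_eq (sum_congr rfl fun c _ => ?_)
  exact hX.meas_iInter fun i => ⟨{c i}, measurableSet_singleton _, rfl⟩

theorem measure_eq_of_le_of_tsum_eq_one {Ω α : Type*} [MeasurableSpace Ω] [Countable α]
    {μ : Measure Ω} [IsProbabilityMeasure μ] {Y : Ω → α} {p : α → ENNReal}
    (hle : ∀ a, μ {ω | Y ω = a} ≤ p a) (hp : ∑' a, p a = 1) (a : α) :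
    μ {ω | Y ω = a} = p a := by
  refine (hle a).antisymm (not_lt.1 fun hlt => ?_)
  have hfin : ∑' b, μ {ω | Y ω = b} ≠ ⊤ :=
    ne_top_of_le_ne_top (hp ▸ ENNReal.one_ne_top) (ENNReal.tsum_le_tsum hle)
  have hlt_one : ∑' b, μ {ω | Y ω = b} < 1 := hp ▸ ENNReal.tsum_lt_tsum hfin hle hlt
  have hone_le : 1 ≤ ∑' b, μ {ω | Y ω = b} := calc
    1 = μ (⋃ b, {ω | Y ω = b}) := by
      rw [Set.iUnion_eq_univ_iff.2 fun ω => ⟨Y ω, rfl⟩, measure_univ]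
    _ ≤ ∑' b, μ {ω | Y ω = b} := measure_iUnion_le _
  exact (hone_le.trans_lt hlt_one).false

theorem measure_sum_eq_segregatingSitesMass {Ω : Type*} [MeasurableSpace Ω] {μ : Measure Ω}
    [IsProbabilityMeasure μ] {θ : ℝ} (hθ : 0 < θ) {j : ℕ} {X : Fin (j + 1) → Ω → ℕ}
    (hX : iIndepFun X μ)
    (hmarg : ∀ i c, μ {ω | X i ω = c} = ENNReal.ofReal (geomMass θ ((i : ℕ) + 1) c))
    (m : ℕ) :
    μ {ω | ∑ i, X i ω = m} = ENNReal.ofReal (segregatingSitesMass θ j m) := by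
  have hgeom_nonneg : ∀ (i : Fin (j + 1)) c, 0 ≤ geomMass θ ((i : ℕ) + 1) c := fun _ _ =>
    geomMass_nonneg hθ.le (by positivity) _
  have hnonneg : ∀ m, 0 ≤ segregatingSitesMass θ j m := fun m =>
    convMass_geomMass hθ j ▸ convMass_nonneg hgeom_nonneg m
  refine measure_eq_of_le_of_tsum_eq_one (Y := fun ω => ∑ i, X i ω)
    (p := fun m => ENNReal.ofReal (segregatingSitesMass θ j m)) (fun m => ?_) ?_ m
  · rw [← convMass_geomMass hθ, ENNReal.ofReal_convMass hgeom_nonneg]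
    simpa only [hmarg] using hX.measure_sum_eq_le m
  · rw [← ENNReal.ofReal_tsum_of_nonneg hnonneg (hasSum_segregatingSitesMass hθ j).summable,
      (hasSum_segregatingSitesMass hθ j).tsum_eq, ENNReal.ofReal_one]

/-- Let `G_1, …, G_{n-1}` be independent, `G_k` geometric on `ℕ` with success probability
`k/(k+θ)`, and let `S_n = ∑_{k=1}^{n-1} G_k`. Then for every `m ∈ ℕ`,
`P(S_n = m) = ((n-1)/θ) ∑_{k=1}^{n-1} (-1)^(k-1) C(n-2, k-1) (θ/(k+θ))^(m+1)`. -/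
theorem segregating_sites_pmf {Ω : Type*} [MeasurableSpace Ω] (μ : Measure Ω)
    [IsProbabilityMeasure μ] (θ : ℝ) (hθ : 0 < θ) (n : ℕ) (hn : 2 ≤ n)
    (G : ℕ → Ω → ℕ)
    (hindep : iIndepFun (fun k : Fin (n - 1) => G (k + 1)) μ)
    (hgeom : ∀ k : ℕ, 1 ≤ k → k ≤ n - 1 → ∀ m : ℕ,
      μ {ω | G k ω = m} = ENNReal.ofReal ((k / (k + θ)) * (θ / (k + θ)) ^ m))
    (m : ℕ) :
    μ {ω | (∑ k ∈ Finset.Icc 1 (n - 1), G k ω : ℕ) = m}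
      = ENNReal.ofReal ((((n : ℝ) - 1) / θ)
          * ∑ k ∈ Finset.Icc 1 (n - 1),
              (-1 : ℝ) ^ (k - 1) * (Nat.choose (n - 2) (k - 1) : ℝ)
                * (θ / (k + θ)) ^ (m + 1)) := by
  obtain ⟨j, rfl⟩ : ∃ j, n = j + 2 := ⟨n - 2, by omega⟩
  have hsum (ω : Ω) : ∑ k ∈ Icc 1 (j + 2 - 1), G k ω = ∑ i : Fin (j + 1), G (i + 1) ω := by
    rw [sum_Icc_one_eq_sum_range, Fin.sum_univ_eq_sum_range (fun i => G (i + 1) ω)]; rfl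
  simp_rw [hsum]
  rw [measure_sum_eq_segregatingSitesMass hθ hindep (fun i c => ?_) m, segregatingSitesMass,
    sum_Icc_one_eq_sum_range]
  · push_cast
    congr 2
    ring
  · rw [hgeom _ (by omega) (by omega), geomMass]
    push_cast
    rfl
end
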